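/- arXiv:2101.01650 — 2 statements merged into one kernel-verified Lean document; each statement's English description precedes it below -/
import Mathlib

section
/- Let k be an odd positive integer, let μ = (m₁, …, m_n) be a list of nonzero integers, and let d be a positive divisor of k that also divides every entry m_i. Then n_{k/d}((m₁/d, …, m_n/d)) ≡ n_k((m₁, …, m_n)) (mod 2), where n_{k/d} is defined with respect to the odd positive integer k/d. -/
open Finset

/-- `nuQbar k m = ν_{q̲}(m) = Σ_{q ∈ Q(k)} min(ν_q(m), ν_q(k))`, where `Q(k)` is the set of
primes `q` dividing `k` with `q ≡ 3` or `5 (mod 8)`, and `ν_q` denotes the `q`-adic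
valuation. -/
def nuQbar (k : ℕ) (m : ℤ) : ℕ :=
  ∑ q ∈ k.primeFactors.filter (fun q => q % 8 = 3 ∨ q % 8 = 5),
    min (padicValInt q m) (k.factorization q)

/-- `nK k μ` is the number of entries `m` of the list `μ` with
`ν_{q̲}(m) ≢ ν_{q̲}(k) (mod 2)`. -/
def nK (k : ℕ) (μ : List ℤ) : ℕ :=
  μ.countP (fun m => decide (nuQbar k m % 2 ≠ nuQbar k (k : ℤ) % 2))

lemma nuQbar_eq_sum (k : ℕ) (m : ℤ) :
    nuQbar k m = ∑ q ∈ k.primeFactors.filter (fun q => q % 8 = 3 ∨ q % 8 = 5),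
      min (m.natAbs.factorization q) (k.factorization q) := by
  refine Finset.sum_congr rfl fun q hq => ?_
  have hp : q.Prime := Nat.prime_of_mem_primeFactors (Finset.mem_filter.mp hq).1
  rw [Nat.factorization_def m.natAbs hp, Nat.factorization_def k hp]
  rfl

lemma nuQbar_key (k : ℕ) (hk : 0 < k) (d : ℕ) (hd : 0 < d) (hdk : d ∣ k)
    (m : ℤ) (hm : m ≠ 0) (hdm : (d : ℤ) ∣ m) :
    nuQbar k m + nuQbar (k / d) ((k / d : ℕ) : ℤ)
      = nuQbar (k / d) (m / (d : ℤ)) + nuQbar k (k : ℤ) := by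
  have hdm' : d ∣ m.natAbs := Int.natCast_dvd.mp hdm
  have hkd0 : 0 < k / d := Nat.div_pos (Nat.le_of_dvd hk hdk) hd
  have hm0 : m.natAbs ≠ 0 := by simpa using hm
  have hmd0 : m.natAbs / d ≠ 0 := by
    have := Nat.div_pos (Nat.le_of_dvd (Nat.pos_of_ne_zero hm0) hdm') hd
    omega
  have hmd : (m / (d : ℤ)).natAbs = m.natAbs / d := by
    obtain ⟨c, rfl⟩ := hdm
    rw [Int.mul_ediv_cancel_left _ (by exact_mod_cast hd.ne')]
    rw [Int.natAbs_mul, Int.natAbs_natCast, Nat.mul_div_cancel_left _ hd]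
  -- factorization decompositions
  have hκ : ∀ q, k.factorization q = d.factorization q + (k / d).factorization q := by
    intro q
    conv_lhs => rw [← Nat.mul_div_cancel' hdk]
    rw [Nat.factorization_mul hd.ne' hkd0.ne', Finsupp.add_apply]
  have hα : ∀ q, m.natAbs.factorization q
      = d.factorization q + (m.natAbs / d).factorization q := by
    intro q
    conv_lhs => rw [← Nat.mul_div_cancel' hdm']
    rw [Nat.factorization_mul hd.ne' hmd0, Finsupp.add_apply]
  set F := k.primeFactors.filter (fun q => q % 8 = 3 ∨ q % 8 = 5) with hF
  set G := (k / d).primeFactors.filter (fun q => q % 8 = 3 ∨ q % 8 = 5) with hG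
  have hGF : G ⊆ F :=
    Finset.filter_subset_filter _ (Nat.primeFactors_mono (Nat.div_dvd_of_dvd hdk) hk.ne')
  -- κ' vanishes off G (among elements of F)
  have hκ'0 : ∀ q ∈ F \ G, (k / d).factorization q = 0 := by
    intro q hq
    rw [Finset.mem_sdiff] at hq
    obtain ⟨hqF, hqG⟩ := hq
    rw [hF, Finset.mem_filter] at hqF
    apply Nat.factorization_eq_zero_of_not_dvd
    intro hdvd
    exact hqG (by
      rw [hG, Finset.mem_filter]
      exact ⟨Nat.mem_primeFactors.mpr
        ⟨Nat.prime_of_mem_primeFactors hqF.1, hdvd, hkd0.ne'⟩, hqF.2⟩)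
  rw [nuQbar_eq_sum, nuQbar_eq_sum, nuQbar_eq_sum, nuQbar_eq_sum, ← hF, ← hG, hmd,
    Int.natAbs_natCast, Int.natAbs_natCast]
  have hsum1 : ∀ f : ℕ → ℕ, ∑ q ∈ F, f q = ∑ q ∈ F \ G, f q + ∑ q ∈ G, f q :=
    fun f => (Finset.sum_sdiff hGF).symm
  rw [hsum1 (fun q => min (m.natAbs.factorization q) (k.factorization q)),
    hsum1 (fun q => min (k.factorization q) (k.factorization q))]
  have e1 : ∑ q ∈ F \ G, min (m.natAbs.factorization q) (k.factorization q)
      = ∑ q ∈ F \ G, min (k.factorization q) (k.factorization q) := by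
    refine Finset.sum_congr rfl fun q hq => ?_
    have h0 := hκ'0 q hq
    have h1 := hκ q
    have h2 := hα q
    omega
  have e2 : ∑ q ∈ G, min (m.natAbs.factorization q) (k.factorization q)
        + ∑ q ∈ G, min ((k / d).factorization q) ((k / d).factorization q)
      = ∑ q ∈ G, min ((m.natAbs / d).factorization q) ((k / d).factorization q)
        + ∑ q ∈ G, min (k.factorization q) (k.factorization q) := by
    rw [← Finset.sum_add_distrib, ← Finset.sum_add_distrib]
    refine Finset.sum_congr rfl fun q hq => ?_
    have h1 := hκ q
    have h2 := hα q
    omega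
  omega

/-- If `k` is an odd positive integer, `μ` a list of nonzero integers, and `d` a positive
divisor of `k` dividing every entry of `μ`, then
`n_{k/d}(μ/d) ≡ n_k(μ) (mod 2)`. -/
theorem nK_div (k : ℕ) (hk : 0 < k) (hkodd : Odd k)
    (μ : List ℤ) (hμ : ∀ m ∈ μ, m ≠ 0)
    (d : ℕ) (hd : 0 < d) (hdk : d ∣ k) (hdμ : ∀ m ∈ μ, (d : ℤ) ∣ m) :
    nK (k / d) (μ.map (fun m => m / (d : ℤ))) % 2 = nK k μ % 2 := by
  have heq : nK (k / d) (μ.map (fun m => m / (d : ℤ))) = nK k μ := by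
    unfold nK
    rw [List.countP_map]
    refine List.countP_congr fun m hm => ?_
    have hkey := nuQbar_key k hk d hd hdk m (hμ m hm) (hdμ m hm)
    simp only [Function.comp, decide_eq_true_eq, decide_eq_decide]
    constructor <;> intro h <;> omega
  rw [heq]
end

section
/- Let k be an odd positive integer and let n, n' be integers with n·n' ≡ 1 (mod k). Then N_k(n) = N_k(n'). -/
open scoped Classical

/-- `Nk k n` is the number of pairs of integers `(b₁, b₂)` with
`1 ≤ b₁ ≤ (k-1)/2`, `1 ≤ b₂ ≤ (k-1)/2`, `b₁ + b₂ ≥ (k+1)/2` and `b₂ ≡ n·b₁ (mod k)`. -/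
noncomputable def Nk (k : ℕ) (n : ℤ) : ℕ :=
  ((Finset.Icc (1 : ℤ) (((k : ℤ) - 1) / 2) ×ˢ Finset.Icc (1 : ℤ) (((k : ℤ) - 1) / 2)).filter
    (fun p => ((k : ℤ) + 1) / 2 ≤ p.1 + p.2 ∧ p.2 ≡ n * p.1 [ZMOD (k : ℤ)])).card

lemma swap_mem_aux (k : ℕ) (n n' : ℤ) (h : n * n' ≡ 1 [ZMOD (k : ℤ)]) (p : ℤ × ℤ)
    (hp : p ∈ (Finset.Icc (1 : ℤ) (((k : ℤ) - 1) / 2) ×ˢ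
        Finset.Icc (1 : ℤ) (((k : ℤ) - 1) / 2)).filter
      (fun p => ((k : ℤ) + 1) / 2 ≤ p.1 + p.2 ∧ p.2 ≡ n * p.1 [ZMOD (k : ℤ)])) :
    (p.2, p.1) ∈ (Finset.Icc (1 : ℤ) (((k : ℤ) - 1) / 2) ×ˢ
        Finset.Icc (1 : ℤ) (((k : ℤ) - 1) / 2)).filter
      (fun p => ((k : ℤ) + 1) / 2 ≤ p.1 + p.2 ∧ p.2 ≡ n' * p.1 [ZMOD (k : ℤ)]) := by
  simp only [Finset.mem_filter, Finset.mem_product] at hp ⊢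
  obtain ⟨⟨h1, h2⟩, h3, h4⟩ := hp
  refine ⟨⟨h2, h1⟩, by linarith, ?_⟩
  calc p.1 = 1 * p.1 := (one_mul _).symm
    _ ≡ (n * n') * p.1 [ZMOD (k : ℤ)] := (h.mul_right p.1).symm
    _ = n' * (n * p.1) := by ring
    _ ≡ n' * p.2 [ZMOD (k : ℤ)] := (h4.symm.mul_left n')

/-- For an odd positive integer `k` and integers `n`, `n'` with `n·n' ≡ 1 (mod k)`,
one has `N_k(n) = N_k(n')`. -/
theorem Nk_reciprocal (k : ℕ) (hk : 0 < k) (hkodd : Odd k)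
    (n n' : ℤ) (h : n * n' ≡ 1 [ZMOD (k : ℤ)]) :
    Nk k n = Nk k n' := by
  have h' : n' * n ≡ 1 [ZMOD (k : ℤ)] := by rwa [mul_comm] at h
  unfold Nk
  refine Finset.card_bij (fun p _ => (p.2, p.1)) (fun p hp => swap_mem_aux k n n' h p hp)
    (fun p _ q _ hpq => ?_) (fun q hq => ⟨(q.2, q.1), swap_mem_aux k n' n h' q hq, rfl⟩)
  · exact Prod.ext (congrArg Prod.snd hpq) (congrArg Prod.fst hpq)
end
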